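/- Let γ:[0,1]→ℝⁿ be a piecewise smooth path and let ω₁,…,ω_q be compactly supported smooth one-forms on ℝⁿ with ∫_γ ω₁ω₂⋯ω_q ≠ 0. Then there exist one-forms ω̄₁,…,ω̄_q on ℝⁿ with polynomial coefficients (each ω̄_m = Σ_{i=1}^n P_{m,i} dx_i with P_{m,i} polynomial functions on ℝⁿ) such that ∫_γ ω̄₁ω̄₂⋯ω̄_q ≠ 0. -/

import Mathlib

open Set MeasureTheory intervalIntegral Topology
open scoped Manifold

noncomputable section

namespace ChenPaper

/-- A strictly increasing partition `0 = s 0 < s 1 < ⋯ < s k = 1` of `[0,1]`. -/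
def IsPartition {k : ℕ} (s : Fin (k + 1) → ℝ) : Prop :=
  s 0 = 0 ∧ s (Fin.last k) = 1 ∧ StrictMono s

variable {E : Type*} [NormedAddCommGroup E] [NormedSpace ℝ E]

/-- A path `γ : [0,1] → E` is piecewise smooth if there is a partition of `[0,1]`
on whose closed subintervals `γ` is `C^∞`. -/
def PiecewiseSmooth (γ : ℝ → E) : Prop :=
  ∃ (k : ℕ) (s : Fin (k + 1) → ℝ), IsPartition s ∧
    ∀ j : Fin k, ContDiffOn ℝ (⊤ : ℕ∞) γ (Icc (s j.castSucc) (s j.succ))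

/-- A path is piecewise smoothly immersed if it is constant, or piecewise `C^∞`
with nowhere-vanishing (one-sided) derivative on each piece. -/
def PiecewiseSmoothImmersed (γ : ℝ → E) : Prop :=
  (∀ t ∈ Icc (0:ℝ) 1, γ t = γ 0) ∨
  ∃ (k : ℕ) (s : Fin (k + 1) → ℝ), IsPartition s ∧
    ∀ j : Fin k, ContDiffOn ℝ (⊤ : ℕ∞) γ (Icc (s j.castSucc) (s j.succ)) ∧
      ∀ t ∈ Icc (s j.castSucc) (s j.succ),
        derivWithin γ (Icc (s j.castSucc) (s j.succ)) t ≠ 0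

/-- Concatenation of paths. -/
def pconcat {X : Type*} (a b : ℝ → X) : ℝ → X :=
  fun t => if t ≤ 1 / 2 then a (2 * t) else b (2 * t - 1)

/-- Reversal of a path. -/
def pinv {X : Type*} (a : ℝ → X) : ℝ → X := fun t => a (1 - t)

/-- Orientation-preserving piecewise smooth reparametrization. -/
def Reparam {X : Type*} (α β : ℝ → X) : Prop :=
  ∃ σ : ℝ → ℝ, PiecewiseSmooth σ ∧ σ 0 = 0 ∧ σ 1 = 1 ∧
    StrictMonoOn σ (Icc 0 1) ∧ MapsTo σ (Icc 0 1) (Icc 0 1) ∧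
    (∃ τ : ℝ → ℝ, PiecewiseSmooth τ ∧ ∀ t ∈ Icc (0:ℝ) 1, τ (σ t) = t) ∧
    ∀ t ∈ Icc (0:ℝ) 1, β t = α (σ t)

/-- One step of the retrace relation, relative to a class `C` of paths:
either a reparametrization, or cancelling a retracing `a · a⁻¹` inserted
between `α` and `β`. -/
def RetraceBase {X : Type*} (C : (ℝ → X) → Prop) (γ₁ γ₂ : ℝ → X) : Prop :=
  Reparam γ₁ γ₂ ∨
  ∃ α β a : ℝ → X, C α ∧ C β ∧ C a ∧ a 0 = α 1 ∧ β 0 = α 1 ∧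
    (∀ t ∈ Icc (0:ℝ) 1, γ₁ t = pconcat α (pconcat (pconcat a (pinv a)) β) t) ∧
    (∀ t ∈ Icc (0:ℝ) 1, γ₂ t = pconcat α β t)

/-- The retrace relation: the equivalence relation generated by `RetraceBase C`. -/
def RetraceEquiv {X : Type*} (C : (ℝ → X) → Prop) : (ℝ → X) → (ℝ → X) → Prop :=
  Relation.EqvGen (RetraceBase C)

/-- `η` is a thin homotopy (rel endpoints) from the loop `α` to the loop `β`, based at `p`. -/
def IsThinHomotopy {X : Type*} [TopologicalSpace X] (p : X) (α β : ℝ → X)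
    (η : ℝ × ℝ → X) : Prop :=
  ContinuousOn η (Icc 0 1 ×ˢ Icc 0 1) ∧
  (∀ t ∈ Icc (0:ℝ) 1, η (0, t) = α t) ∧
  (∀ t ∈ Icc (0:ℝ) 1, η (1, t) = β t) ∧
  (∀ s ∈ Icc (0:ℝ) 1, η (s, 0) = p ∧ η (s, 1) = p) ∧
  η '' (Icc 0 1 ×ˢ Icc 0 1) ⊆ α '' Icc 0 1 ∪ β '' Icc 0 1

/-- Thin equivalence within the class `C` of loops based at `p`: the equivalence
relation on `C` generated by existence of a thin homotopy. -/
def ThinEquiv {X : Type*} [TopologicalSpace X] (C : (ℝ → X) → Prop) (p : X) :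
    (ℝ → X) → (ℝ → X) → Prop :=
  Relation.EqvGen (fun α β => C α ∧ C β ∧ ∃ η, IsThinHomotopy p α β η)

variable {n : ℕ}

/-- The `i`-th coordinate derivative of a path in `ℝⁿ` (junk value where not differentiable;
for a piecewise smooth path this is the honest derivative off the partition points). -/
def pathDeriv (γ : ℝ → (Fin n → ℝ)) (i : Fin n) : ℝ → ℝ :=
  fun t => deriv (fun u => γ u i) t

/-- `chenS γ [i_p, …, i_1] t` is the iterated integral
`∫_{0 ≤ t₁ ≤ ⋯ ≤ t_p ≤ t} γ'_{i₁}(t₁) ⋯ γ'_{i_p}(t_p)`; note the reversed index list. -/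
def chenS (γ : ℝ → (Fin n → ℝ)) : List (Fin n) → ℝ → ℝ
  | [], _ => 1
  | i :: is, t => ∫ s in (0:ℝ)..t, chenS γ is s * pathDeriv γ i s

/-- `S_t(i₁,…,i_p)`: the elementary iterated integral over `{0 ≤ t₁ ≤ ⋯ ≤ t_p ≤ t}`,
with the index list in natural order `[i₁, …, i_p]`. -/
def sigPartial (γ : ℝ → (Fin n → ℝ)) (l : List (Fin n)) (t : ℝ) : ℝ :=
  chenS γ l.reverse t

/-- The elementary iterated integral `∫_γ dx_{i₁} ⋯ dx_{i_p}` for `l = [i₁, …, i_p]`. -/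
def elemIterInt (γ : ℝ → (Fin n → ℝ)) (l : List (Fin n)) : ℝ :=
  chenS γ l.reverse 1


/-- `oneFormIterAux γ [ω_q, …, ω₁] t` is the iterated integral
`∫_{0 ≤ t₁ ≤ ⋯ ≤ t_q ≤ t} ω₁(γ(t₁))(γ'(t₁)) ⋯ ω_q(γ(t_q))(γ'(t_q))`
(note the reversed list). -/
def oneFormIterAux (γ : ℝ → (Fin n → ℝ)) :
    List ((Fin n → ℝ) → (Fin n → ℝ) →L[ℝ] ℝ) → ℝ → ℝ
  | [], _ => 1
  | ω :: rest, t => ∫ s in (0:ℝ)..t, oneFormIterAux γ rest s * ω (γ s) (deriv γ s)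

/-- The iterated integral `∫_γ ω₁ω₂⋯ω_q` of one-forms along `γ`, for the list
`[ω₁, …, ω_q]` in natural order. -/
def oneFormIterInt (γ : ℝ → (Fin n → ℝ))
    (ωs : List ((Fin n → ℝ) → (Fin n → ℝ) →L[ℝ] ℝ)) : ℝ :=
  oneFormIterAux γ ωs.reverse 1

/-- A one-form on `ℝⁿ` has polynomial coefficients if it is `Σᵢ Pᵢ dxᵢ` with each `Pᵢ`
a polynomial function on `ℝⁿ`. -/
def IsPolyOneForm {n : ℕ} (ω : (Fin n → ℝ) → (Fin n → ℝ) →L[ℝ] ℝ) : Prop :=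
  ∃ P : Fin n → MvPolynomial (Fin n) ℝ,
    ∀ (x v : Fin n → ℝ), ω x v = ∑ i : Fin n, MvPolynomial.eval x (P i) * v i

/-! ### Auxiliary lemmas -/

section Aux

lemma IsPartition.k_pos {k : ℕ} {s : Fin (k + 1) → ℝ} (hs : IsPartition s) : 0 < k := by
  rcases hs with ⟨h0, h1, _⟩
  rcases Nat.eq_zero_or_pos k with hk | hk
  · subst hk
    rw [show Fin.last 0 = 0 from rfl, h0] at h1
    norm_num at h1
  · exact hk

lemma IsPartition.exists_piece {k : ℕ} {s : Fin (k + 1) → ℝ} (hs : IsPartition s)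
    {t : ℝ} (ht : t ∈ Icc (0:ℝ) 1) :
    ∃ j : Fin k, t ∈ Icc (s j.castSucc) (s j.succ) := by
  classical
  obtain ⟨h0, h1, hmono⟩ := hs
  have hk : 0 < k := IsPartition.k_pos ⟨h0, h1, hmono⟩
  set F : Finset (Fin (k+1)) := Finset.univ.filter (fun j => s j ≤ t) with hF
  have hFne : F.Nonempty := ⟨0, by simp [hF, h0, ht.1]⟩
  set j := F.max' hFne with hj
  have hjF : j ∈ F := F.max'_mem hFne
  have hjt : s j ≤ t := by
    have := hjF; rw [hF, Finset.mem_filter] at this; exact this.2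
  by_cases hlast : j = Fin.last k
  · have ht1 : t = 1 := le_antisymm ht.2 (by rw [← h1, ← hlast]; exact hjt)
    refine ⟨⟨k - 1, by omega⟩, ?_, ?_⟩
    · have hle : (⟨k-1, by omega⟩ : Fin k).castSucc ≤ Fin.last k := Fin.le_last _
      have := hmono.monotone hle; rw [h1] at this; linarith
    · have hsucc : (⟨k-1, by omega⟩ : Fin k).succ = Fin.last k := by
        ext; simp [Fin.last]; omega
      rw [hsucc, h1]; exact ht.2
  · have hjlt : (j : ℕ) < k := by
      have h2 := j.isLt
      rcases lt_or_eq_of_le (Nat.lt_succ_iff.mp h2) with h | h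
      · exact h
      · exact absurd (Fin.ext h) hlast
    refine ⟨⟨j, hjlt⟩, ⟨?_, ?_⟩⟩
    · have : (⟨(j : ℕ), hjlt⟩ : Fin k).castSucc = j := by ext; rfl
      rw [this]; exact hjt
    · by_contra hcon
      push_neg at hcon
      have hmem : (⟨(j : ℕ), hjlt⟩ : Fin k).succ ∈ F := by
        rw [hF, Finset.mem_filter]
        exact ⟨Finset.mem_univ _, hcon.le⟩
      have hle := F.le_max' _ hmem
      rw [← hj] at hle
      have : (j : ℕ) + 1 ≤ (j : ℕ) := hle
      omega

lemma PiecewiseSmooth.continuousOn_Icc {γ : ℝ → E} (hγ : PiecewiseSmooth γ) :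
    ContinuousOn γ (Icc 0 1) := by
  obtain ⟨k, s, hs, hsm⟩ := hγ
  have h := (locallyFinite_of_finite
      (fun j : Fin k => Icc (s j.castSucc) (s j.succ))).continuousOn_iUnion
    (fun j => isClosed_Icc) (fun j => (hsm j).continuousOn)
  refine h.mono fun t ht => ?_
  obtain ⟨j, hj⟩ := hs.exists_piece ht
  exact mem_iUnion.mpr ⟨j, hj⟩

lemma PiecewiseSmooth.exists_deriv_bound {n : ℕ} {γ : ℝ → (Fin n → ℝ)}
    (hγ : PiecewiseSmooth γ) :
    ∃ M : ℝ, 0 ≤ M ∧ ∀ t ∈ Icc (0:ℝ) 1, ‖deriv γ t‖ ≤ M := by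
  obtain ⟨k, s, hs, hsm⟩ := hγ
  have hlt : ∀ j : Fin k, s j.castSucc < s j.succ :=
    fun j => hs.2.2 (Fin.castSucc_lt_succ : j.castSucc < j.succ)
  have hcd : ∀ j : Fin k, ContinuousOn
      (derivWithin γ (Icc (s j.castSucc) (s j.succ))) (Icc (s j.castSucc) (s j.succ)) :=
    fun j => (hsm j).continuousOn_derivWithin (uniqueDiffOn_Icc (hlt j)) (by simp)
  have hbd : ∀ j : Fin k, ∃ C, ∀ x ∈ Icc (s j.castSucc) (s j.succ),
      ‖derivWithin γ (Icc (s j.castSucc) (s j.succ)) x‖ ≤ C :=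
    fun j => isCompact_Icc.exists_bound_of_continuousOn (hcd j)
  choose C hC using hbd
  obtain ⟨M, hM⟩ := Finite.exists_le C
  refine ⟨max M 0, le_max_right _ _, fun t ht => ?_⟩
  obtain ⟨j, hj⟩ := hs.exists_piece ht
  by_cases hd : DifferentiableAt ℝ γ t
  · rw [← hd.derivWithin ((uniqueDiffOn_Icc (hlt j)) t hj)]
    exact le_trans (hC j t hj) (le_trans (hM j) (le_max_left _ _))
  · rw [deriv_zero_of_not_differentiableAt hd]; simp

/-- Multivariate Stone–Weierstrass: polynomial approximation on a compact set in `ℝⁿ`. -/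
lemma exists_mvPoly_near {n : ℕ} {K : Set (Fin n → ℝ)} (hK : IsCompact K)
    (f : (Fin n → ℝ) → ℝ) (hf : Continuous f) {ε : ℝ} (hε : 0 < ε) :
    ∃ p : MvPolynomial (Fin n) ℝ, ∀ x ∈ K, |MvPolynomial.eval x p - f x| < ε := by
  haveI : CompactSpace K := isCompact_iff_compactSpace.mp hK
  set coord : Fin n → C(K, ℝ) := fun i =>
    ⟨fun x => (x : Fin n → ℝ) i, (continuous_apply i).comp continuous_subtype_val⟩ with hcoord
  set A : Subalgebra ℝ C(K, ℝ) := Algebra.adjoin ℝ (Set.range coord) with hA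
  have hsep : A.SeparatesPoints := by
    intro x y hxy
    have hne : (x : Fin n → ℝ) ≠ (y : Fin n → ℝ) := fun h => hxy (Subtype.ext h)
    obtain ⟨i, hi⟩ := Function.ne_iff.mp hne
    exact ⟨coord i, ⟨coord i, Algebra.subset_adjoin ⟨i, rfl⟩, rfl⟩, hi⟩
  obtain ⟨g, hgf⟩ :=
    ContinuousMap.exists_mem_subalgebra_near_continuous_of_separatesPoints A hsep
      (fun x : K => f x) (hf.comp continuous_subtype_val) ε hε
  have hrange : A ≤ (MvPolynomial.aeval coord :
      MvPolynomial (Fin n) ℝ →ₐ[ℝ] C(K, ℝ)).range := by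
    rw [hA, Algebra.adjoin_le_iff]
    rintro _ ⟨i, rfl⟩
    exact ⟨MvPolynomial.X i, MvPolynomial.aeval_X _ _⟩
  obtain ⟨p, hp⟩ := hrange g.2
  refine ⟨p, fun x hx => ?_⟩
  have key : ∀ pp : MvPolynomial (Fin n) ℝ,
      (MvPolynomial.aeval coord pp : C(K, ℝ)) ⟨x, hx⟩ = MvPolynomial.eval x pp := by
    intro pp
    induction pp using MvPolynomial.induction_on with
    | C a => simp [hcoord]
    | add p q hp hq => simp [map_add, hp, hq]
    | mul_X p i hp => simp [map_mul, hp, hcoord]; exact Or.inl hp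
  have h2 := hgf ⟨x, hx⟩
  rw [Real.norm_eq_abs] at h2
  have h3 : (g : C(K, ℝ)) ⟨x, hx⟩ = MvPolynomial.eval x p := by
    rw [← hp]; exact key p
  rw [show ((g : C(K, ℝ)) : K → ℝ) ⟨x, hx⟩ = MvPolynomial.eval x p from h3] at h2
  exact h2

lemma aemeas_form {n : ℕ} {γ : ℝ → (Fin n → ℝ)} (hc : ContinuousOn γ (Icc 0 1))
    (ν : (Fin n → ℝ) → (Fin n → ℝ) →L[ℝ] ℝ) (hν : Continuous ν) :
    AEMeasurable (fun t => ν (γ t) (deriv γ t)) (volume.restrict (Icc (0:ℝ) 1)) := by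
  have hγm : AEMeasurable γ (volume.restrict (Icc (0:ℝ) 1)) :=
    hc.aemeasurable measurableSet_Icc
  have hd : AEMeasurable (deriv γ) (volume.restrict (Icc (0:ℝ) 1)) :=
    (measurable_deriv γ).aemeasurable
  have hpair : AEMeasurable (fun t => (ν (γ t), deriv γ t))
      (volume.restrict (Icc (0:ℝ) 1)) :=
    (hν.measurable.comp_aemeasurable hγm).prodMk hd
  exact (isBoundedBilinearMap_apply (𝕜 := ℝ)
    (E := Fin n → ℝ) (F := ℝ)).continuous.measurable.comp_aemeasurable hpair

lemma intInt_of_bdd {f : ℝ → ℝ} {t C : ℝ} (ht : t ∈ Icc (0:ℝ) 1)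
    (hm : AEMeasurable f (volume.restrict (Icc (0:ℝ) 1)))
    (hb : ∀ s ∈ Icc (0:ℝ) 1, |f s| ≤ C) :
    IntervalIntegrable f volume 0 t := by
  rw [intervalIntegrable_iff_integrableOn_Ioc_of_le ht.1]
  have hsub : Ioc (0:ℝ) t ⊆ Icc (0:ℝ) 1 :=
    fun s hs => ⟨hs.1.le, hs.2.trans ht.2⟩
  have hm' : AEStronglyMeasurable f (volume.restrict (Ioc (0:ℝ) t)) :=
    (hm.mono_measure (Measure.restrict_mono hsub le_rfl)).aestronglyMeasurable
  refine ⟨hm', HasFiniteIntegral.restrict_of_bounded (C := C) measure_Ioc_lt_top ?_⟩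
  filter_upwards [ae_restrict_mem measurableSet_Ioc] with s hs
  rw [Real.norm_eq_abs]
  exact hb s (hsub hs)

lemma oneFormIterAux_props {n : ℕ} {γ : ℝ → (Fin n → ℝ)} (hc : ContinuousOn γ (Icc 0 1))
    (l : List ((Fin n → ℝ) → (Fin n → ℝ) →L[ℝ] ℝ)) {D : ℝ} (hD : 0 ≤ D)
    (hcontl : ∀ ν ∈ l, Continuous ν)
    (hbd : ∀ ν ∈ l, ∀ t ∈ Icc (0:ℝ) 1, |ν (γ t) (deriv γ t)| ≤ D) :
    ContinuousOn (oneFormIterAux γ l) (Icc 0 1) ∧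
      (∀ t ∈ Icc (0:ℝ) 1, |oneFormIterAux γ l t| ≤ D ^ l.length) := by
  induction l with
  | nil => exact ⟨continuousOn_const, by simp [oneFormIterAux]⟩
  | cons ν l ih =>
    obtain ⟨ihc, ihb⟩ := ih (fun ν h => hcontl ν (List.mem_cons_of_mem _ h))
      (fun ν h => hbd ν (List.mem_cons_of_mem _ h))
    have hνc : Continuous ν := hcontl ν List.mem_cons_self
    have hνb := hbd ν List.mem_cons_self
    set f : ℝ → ℝ := fun s => oneFormIterAux γ l s * ν (γ s) (deriv γ s) with hf
    have hfm : AEMeasurable f (volume.restrict (Icc (0:ℝ) 1)) :=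
      (ihc.aemeasurable measurableSet_Icc).mul (aemeas_form hc ν hνc)
    have hfb : ∀ s ∈ Icc (0:ℝ) 1, |f s| ≤ D ^ l.length * D := fun s hs => by
      rw [hf, abs_mul]
      exact mul_le_mul (ihb s hs) (hνb s hs) (abs_nonneg _) (pow_nonneg hD _)
    have heq : oneFormIterAux γ (ν :: l) = fun t => ∫ s in (0:ℝ)..t, f s := rfl
    constructor
    · have hint : IntegrableOn f (uIcc (0:ℝ) 1) := by
        rw [uIcc_of_le zero_le_one, integrableOn_Icc_iff_integrableOn_Ioc]
        exact (intervalIntegrable_iff_integrableOn_Ioc_of_le zero_le_one).mp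
          (intInt_of_bdd (right_mem_Icc.mpr zero_le_one) hfm hfb)
      have h := intervalIntegral.continuousOn_primitive_interval hint
      rw [uIcc_of_le zero_le_one] at h
      rw [heq]
      exact h
    · intro t ht
      have hb2 : |∫ s in (0:ℝ)..t, f s| ≤ D ^ l.length * D * |t - 0| := by
        have := intervalIntegral.norm_integral_le_of_norm_le_const
          (a := 0) (b := t) (C := D ^ l.length * D) (f := f) (fun x hx => by
            rw [Real.norm_eq_abs]
            rw [uIoc_of_le ht.1] at hx
            exact hfb x ⟨hx.1.le, hx.2.trans ht.2⟩)
        simpa using this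
      calc |oneFormIterAux γ (ν :: l) t| = |∫ s in (0:ℝ)..t, f s| := by rw [heq]
        _ ≤ D ^ l.length * D * |t - 0| := hb2
        _ ≤ D ^ l.length * D * 1 := by
            apply mul_le_mul_of_nonneg_left _ (by positivity)
            rw [sub_zero, abs_of_nonneg ht.1]; exact ht.2
        _ = D ^ (l.length + 1) := by ring
        _ = D ^ (List.length (ν :: l)) := by rw [List.length_cons]

lemma oneFormIterAux_diff {n : ℕ} {γ : ℝ → (Fin n → ℝ)} (hc : ContinuousOn γ (Icc 0 1))
    {D ε : ℝ} (hD : 1 ≤ D) (hε : 0 ≤ ε)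
    (l₁ l₂ : List ((Fin n → ℝ) → (Fin n → ℝ) →L[ℝ] ℝ))
    (h : List.Forall₂ (fun a b => ∀ t ∈ Icc (0:ℝ) 1,
        |a (γ t) (deriv γ t) - b (γ t) (deriv γ t)| ≤ ε) l₁ l₂)
    (hc₁ : ∀ ν ∈ l₁, Continuous ν) (hc₂ : ∀ ν ∈ l₂, Continuous ν)
    (hb₁ : ∀ ν ∈ l₁, ∀ t ∈ Icc (0:ℝ) 1, |ν (γ t) (deriv γ t)| ≤ D)
    (hb₂ : ∀ ν ∈ l₂, ∀ t ∈ Icc (0:ℝ) 1, |ν (γ t) (deriv γ t)| ≤ D) :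
    ∀ t ∈ Icc (0:ℝ) 1,
      |oneFormIterAux γ l₁ t - oneFormIterAux γ l₂ t| ≤
        l₁.length * D ^ l₁.length * ε := by
  have hD0 : (0:ℝ) ≤ D := le_trans zero_le_one hD
  induction h with
  | nil => intro t ht; simp [oneFormIterAux]
  | @cons a b l₁ l₂ hab hl ih =>
    have hc₁' : ∀ ν ∈ l₁, Continuous ν := fun ν h => hc₁ ν (List.mem_cons_of_mem _ h)
    have hc₂' : ∀ ν ∈ l₂, Continuous ν := fun ν h => hc₂ ν (List.mem_cons_of_mem _ h)
    have hb₁' : ∀ ν ∈ l₁, ∀ t ∈ Icc (0:ℝ) 1, |ν (γ t) (deriv γ t)| ≤ D :=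
      fun ν h => hb₁ ν (List.mem_cons_of_mem _ h)
    have hb₂' : ∀ ν ∈ l₂, ∀ t ∈ Icc (0:ℝ) 1, |ν (γ t) (deriv γ t)| ≤ D :=
      fun ν h => hb₂ ν (List.mem_cons_of_mem _ h)
    have ih' := ih hc₁' hc₂' hb₁' hb₂'
    have hac : Continuous a := hc₁ a List.mem_cons_self
    have hbc : Continuous b := hc₂ b List.mem_cons_self
    have hak := hb₁ a List.mem_cons_self
    have hbk := hb₂ b List.mem_cons_self
    obtain ⟨hA, hAb⟩ := oneFormIterAux_props hc l₁ hD0 hc₁' hb₁'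
    obtain ⟨hB, hBb⟩ := oneFormIterAux_props hc l₂ hD0 hc₂' hb₂'
    have hlen : l₂.length = l₁.length := (List.Forall₂.length_eq hl).symm
    intro t ht
    set f₁ : ℝ → ℝ := fun s => oneFormIterAux γ l₁ s * a (γ s) (deriv γ s) with hf₁
    set f₂ : ℝ → ℝ := fun s => oneFormIterAux γ l₂ s * b (γ s) (deriv γ s) with hf₂
    have hf₁b : ∀ s ∈ Icc (0:ℝ) 1, |f₁ s| ≤ D ^ l₁.length * D := fun s hs => by
      rw [hf₁, abs_mul]
      exact mul_le_mul (hAb s hs) (hak s hs) (abs_nonneg _) (pow_nonneg hD0 _)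
    have hf₂b : ∀ s ∈ Icc (0:ℝ) 1, |f₂ s| ≤ D ^ l₁.length * D := fun s hs => by
      rw [hf₂, abs_mul, ← hlen]
      exact mul_le_mul (hBb s hs) (hbk s hs) (abs_nonneg _) (pow_nonneg hD0 _)
    have hi₁ : IntervalIntegrable f₁ volume 0 t :=
      intInt_of_bdd ht ((hA.aemeasurable measurableSet_Icc).mul (aemeas_form hc a hac)) hf₁b
    have hi₂ : IntervalIntegrable f₂ volume 0 t :=
      intInt_of_bdd ht ((hB.aemeasurable measurableSet_Icc).mul (aemeas_form hc b hbc)) hf₂b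
    have heq : oneFormIterAux γ (a :: l₁) t - oneFormIterAux γ (b :: l₂) t
        = ∫ s in (0:ℝ)..t, (f₁ s - f₂ s) := by
      rw [intervalIntegral.integral_sub hi₁ hi₂]; rfl
    set Q : ℝ := (l₁.length + 1) * D ^ (l₁.length + 1) * ε with hQ
    have hQ0 : 0 ≤ Q := by positivity
    have hptwise : ∀ s ∈ Icc (0:ℝ) 1, |f₁ s - f₂ s| ≤ Q := by
      intro s hs
      have hdec : f₁ s - f₂ s
          = (oneFormIterAux γ l₁ s - oneFormIterAux γ l₂ s) * a (γ s) (deriv γ s)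
            + oneFormIterAux γ l₂ s * (a (γ s) (deriv γ s) - b (γ s) (deriv γ s)) := by
        rw [hf₁, hf₂]; ring
      have h1 : |(oneFormIterAux γ l₁ s - oneFormIterAux γ l₂ s) * a (γ s) (deriv γ s)|
          ≤ (l₁.length * D ^ l₁.length * ε) * D := by
        rw [abs_mul]
        exact mul_le_mul (ih' s hs) (hak s hs) (abs_nonneg _) (by positivity)
      have h2 : |oneFormIterAux γ l₂ s * (a (γ s) (deriv γ s) - b (γ s) (deriv γ s))|
          ≤ D ^ l₁.length * ε := by
        rw [abs_mul, ← hlen]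
        exact mul_le_mul (hBb s hs) (hab s hs) (abs_nonneg _) (pow_nonneg hD0 _)
      have hpow : D ^ l₁.length ≤ D ^ (l₁.length + 1) :=
        pow_le_pow_right₀ hD (Nat.le_succ _)
      calc |f₁ s - f₂ s| ≤ _ + _ := hdec ▸ abs_add_le _ _
        _ ≤ (l₁.length * D ^ l₁.length * ε) * D + D ^ l₁.length * ε := add_le_add h1 h2
        _ ≤ l₁.length * D ^ (l₁.length + 1) * ε + D ^ (l₁.length + 1) * ε := by
            have h3 : (l₁.length : ℝ) * D ^ l₁.length * ε * D
                = l₁.length * (D ^ l₁.length * D) * ε := by ring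
            rw [h3, ← pow_succ]
            exact add_le_add le_rfl (mul_le_mul_of_nonneg_right hpow hε)
        _ = Q := by rw [hQ]; ring
    have hnorm : |∫ s in (0:ℝ)..t, (f₁ s - f₂ s)| ≤ Q * |t - 0| := by
      have := intervalIntegral.norm_integral_le_of_norm_le_const
        (a := 0) (b := t) (C := Q) (f := fun s => f₁ s - f₂ s) (fun x hx => by
          rw [Real.norm_eq_abs]
          rw [uIoc_of_le ht.1] at hx
          exact hptwise x ⟨hx.1.le, hx.2.trans ht.2⟩)
      simpa using this
    calc |oneFormIterAux γ (a :: l₁) t - oneFormIterAux γ (b :: l₂) t|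
        = |∫ s in (0:ℝ)..t, (f₁ s - f₂ s)| := by rw [heq]
      _ ≤ Q * |t - 0| := hnorm
      _ ≤ Q * 1 := by
          apply mul_le_mul_of_nonneg_left _ hQ0
          rw [sub_zero, abs_of_nonneg ht.1]; exact ht.2
      _ = (l₁.length + 1) * D ^ (l₁.length + 1) * ε := by rw [hQ]; ring
      _ = (List.length (a :: l₁)) * D ^ (List.length (a :: l₁)) * ε := by
          rw [List.length_cons]; push_cast; ring

lemma forall₂_ofFn {α β : Type*} {R : α → β → Prop} :
    ∀ {q : ℕ} (f : Fin q → α) (g : Fin q → β), (∀ i, R (f i) (g i)) →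
      List.Forall₂ R (List.ofFn f) (List.ofFn g)
  | 0, f, g, h => by simp
  | (q+1), f, g, h => by
      rw [List.ofFn_succ, List.ofFn_succ]
      exact List.Forall₂.cons (h 0) (forall₂_ofFn _ _ fun i => h i.succ)

lemma clm_expand {n : ℕ} (T : (Fin n → ℝ) →L[ℝ] ℝ) (v : Fin n → ℝ) :
    T v = ∑ i : Fin n, T (fun j => if i = j then 1 else 0) * v i := by
  conv_lhs => rw [pi_eq_sum_univ v]
  rw [map_sum]
  refine Finset.sum_congr rfl fun i _ => ?_
  rw [ContinuousLinearMap.map_smul, smul_eq_mul, mul_comm]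

end Aux

/-- If the iterated integral of compactly supported smooth one-forms
`ω₁,…,ω_q` along a piecewise smooth path `γ` is nonzero, then there are one-forms
`ω̄₁,…,ω̄_q` with polynomial coefficients whose iterated integral along `γ` is nonzero. -/
theorem exists_poly_forms_nonvanishing_iterInt {n : ℕ} (q : ℕ) (hq : 1 ≤ q)
    (γ : ℝ → (Fin n → ℝ)) (hγ : PiecewiseSmooth γ)
    (ω : Fin q → ((Fin n → ℝ) → (Fin n → ℝ) →L[ℝ] ℝ))
    (hω : ∀ m : Fin q, ContDiff ℝ (⊤ : ℕ∞) (ω m) ∧ HasCompactSupport (ω m))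
    (hne : oneFormIterInt γ (List.ofFn ω) ≠ 0) :
    ∃ ωb : Fin q → ((Fin n → ℝ) → (Fin n → ℝ) →L[ℝ] ℝ),
      (∀ m : Fin q, IsPolyOneForm (ωb m)) ∧
      oneFormIterInt γ (List.ofFn ωb) ≠ 0 := by
  classical
  have hc : ContinuousOn γ (Icc 0 1) := hγ.continuousOn_Icc
  obtain ⟨M, hM0, hM⟩ := hγ.exists_deriv_bound
  set K := γ '' Icc 0 1 with hKdef
  have hK : IsCompact K := isCompact_Icc.image_of_continuousOn hc
  -- uniform bound for the ω's along γ
  have hbm : ∀ m : Fin q, ∃ C, ∀ x ∈ K, ‖ω m x‖ ≤ C := fun m =>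
    hK.exists_bound_of_continuousOn ((hω m).1.continuous.continuousOn)
  choose C hC using hbm
  obtain ⟨C₀, hC₀⟩ := Finite.exists_le C
  set D : ℝ := max C₀ 0 * M + 1 with hDdef
  have hDM0 : 0 ≤ max C₀ 0 * M := mul_nonneg (le_max_right _ _) hM0
  have hD1 : 1 ≤ D := by rw [hDdef]; linarith
  have hD0 : 0 ≤ D := le_trans zero_le_one hD1
  have hDb : ∀ m : Fin q, ∀ t ∈ Icc (0:ℝ) 1, |ω m (γ t) (deriv γ t)| ≤ D := by
    intro m t ht
    calc |ω m (γ t) (deriv γ t)| ≤ ‖ω m (γ t)‖ * ‖deriv γ t‖ := (ω m (γ t)).le_opNorm _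
      _ ≤ max C₀ 0 * M := mul_le_mul
          (le_trans (hC m _ (mem_image_of_mem γ ht)) (le_trans (hC₀ m) (le_max_left _ _)))
          (hM t ht) (norm_nonneg _) (le_max_right _ _)
      _ ≤ D := by rw [hDdef]; linarith
  set J := oneFormIterInt γ (List.ofFn ω) with hJdef
  have hJ0 : 0 < |J| := abs_pos.mpr hne
  -- choose ε
  obtain ⟨ε, hε0, hεs⟩ : ∃ ε : ℝ, 0 < ε ∧ (q : ℝ) * (D + 1) ^ q * ε < |J| := by
    refine ⟨|J| / ((q : ℝ) * (D + 1) ^ q + 1), by positivity, ?_⟩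
    have hc1 : (0:ℝ) ≤ (q : ℝ) * (D + 1) ^ q := by positivity
    rw [mul_div_assoc', div_lt_iff₀ (by positivity)]
    nlinarith
  -- choose δ
  set δ : ℝ := min ε 1 / ((n : ℝ) * M + 1) with hδdef
  have hδ0 : 0 < δ := div_pos (lt_min hε0 one_pos) (by positivity)
  have hkey : (n : ℝ) * δ * M ≤ min ε 1 := by
    rw [hδdef]
    rw [div_eq_mul_inv]
    have h1 : (0:ℝ) < (n : ℝ) * M + 1 := by positivity
    have h2 : (0:ℝ) < min ε 1 := lt_min hε0 one_pos
    rw [show (n:ℝ) * (min ε 1 * ((n:ℝ) * M + 1)⁻¹) * M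
        = min ε 1 * (((n:ℝ) * M) * ((n:ℝ) * M + 1)⁻¹) from by ring]
    have h3 : ((n:ℝ) * M) * ((n:ℝ) * M + 1)⁻¹ ≤ 1 := by
      rw [← div_eq_mul_inv, div_le_one h1]; linarith
    nlinarith
  -- polynomial approximations of the coefficients
  have happrox : ∀ (m : Fin q) (i : Fin n), ∃ p : MvPolynomial (Fin n) ℝ,
      ∀ x ∈ K, |MvPolynomial.eval x p - ω m x (fun j => if i = j then 1 else 0)| < δ := by
    intro m i
    refine exists_mvPoly_near hK _ ?_ hδ0
    exact (isBoundedBilinearMap_apply (𝕜 := ℝ) (E := Fin n → ℝ) (F := ℝ)).continuous.comp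
      (((hω m).1.continuous).prodMk continuous_const)
  choose P hP using happrox
  set ωb : Fin q → ((Fin n → ℝ) → (Fin n → ℝ) →L[ℝ] ℝ) := fun m x =>
    ∑ i : Fin n, MvPolynomial.eval x (P m i) • ContinuousLinearMap.proj i with hωbdef
  have hωbc : ∀ m, Continuous (ωb m) := fun m =>
    continuous_finset_sum _ fun i _ => (MvPolynomial.continuous_eval _).smul continuous_const
  have hωbapp : ∀ m x v, ωb m x v = ∑ i, MvPolynomial.eval x (P m i) * v i := by
    intro m x v
    rw [hωbdef]
    simp [ContinuousLinearMap.sum_apply, ContinuousLinearMap.proj_apply, smul_eq_mul]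
  have hpoly : ∀ m, IsPolyOneForm (ωb m) := fun m => ⟨P m, fun x v => hωbapp m x v⟩
  -- closeness on K
  have hωbe : ∀ m x (i : Fin n), ωb m x (fun j => if i = j then 1 else 0)
      = MvPolynomial.eval x (P m i) := by
    intro m x i
    rw [hωbapp]
    simp [mul_ite, Finset.sum_ite_eq]
  have hdiffK : ∀ m, ∀ x ∈ K, ‖ω m x - ωb m x‖ ≤ (n : ℝ) * δ := by
    intro m x hx
    refine ContinuousLinearMap.opNorm_le_bound _ (by positivity) fun v => ?_
    rw [show ((ω m x - ωb m x) v) = ∑ i : Fin n,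
        (ω m x - ωb m x) (fun j => if i = j then 1 else 0) * v i from clm_expand _ v]
    rw [Real.norm_eq_abs]
    refine le_trans (Finset.abs_sum_le_sum_abs _ _) ?_
    have hterm : ∀ i : Fin n,
        |(ω m x - ωb m x) (fun j => if i = j then 1 else 0) * v i| ≤ δ * ‖v‖ := by
      intro i
      rw [abs_mul, ContinuousLinearMap.sub_apply, hωbe]
      refine mul_le_mul ?_ ?_ (abs_nonneg _) hδ0.le
      · rw [show ω m x (fun j => if i = j then 1 else 0) - MvPolynomial.eval x (P m i)
            = -(MvPolynomial.eval x (P m i) - ω m x (fun j => if i = j then 1 else 0)) from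
            by ring, abs_neg]
        exact (hP m i x hx).le
      · rw [← Real.norm_eq_abs]; exact norm_le_pi_norm v i
    calc (∑ i : Fin n, |(ω m x - ωb m x) (fun j => if i = j then 1 else 0) * v i|)
        ≤ ∑ _i : Fin n, δ * ‖v‖ := Finset.sum_le_sum fun i _ => hterm i
      _ = (n : ℝ) * δ * ‖v‖ := by
          rw [Finset.sum_const, Finset.card_univ, Fintype.card_fin, nsmul_eq_mul]; ring
  have hclose : ∀ m, ∀ t ∈ Icc (0:ℝ) 1,
      |ω m (γ t) (deriv γ t) - ωb m (γ t) (deriv γ t)| ≤ min ε 1 := by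
    intro m t ht
    have h1 : |ω m (γ t) (deriv γ t) - ωb m (γ t) (deriv γ t)|
        = ‖(ω m (γ t) - ωb m (γ t)) (deriv γ t)‖ := by
      rw [ContinuousLinearMap.sub_apply, Real.norm_eq_abs]
    rw [h1]
    calc ‖(ω m (γ t) - ωb m (γ t)) (deriv γ t)‖
        ≤ ‖ω m (γ t) - ωb m (γ t)‖ * ‖deriv γ t‖ := (ω m (γ t) - ωb m (γ t)).le_opNorm _
      _ ≤ ((n : ℝ) * δ) * M := mul_le_mul (hdiffK m _ (mem_image_of_mem γ ht)) (hM t ht)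
          (norm_nonneg _) (by positivity)
      _ ≤ min ε 1 := by rw [show ((n:ℝ) * δ) * M = (n:ℝ) * δ * M from rfl]; exact hkey
  have hDb' : ∀ m, ∀ t ∈ Icc (0:ℝ) 1, |ωb m (γ t) (deriv γ t)| ≤ D + 1 := by
    intro m t ht
    have := abs_sub_abs_le_abs_sub (ωb m (γ t) (deriv γ t)) (ω m (γ t) (deriv γ t))
    have h2 : |ωb m (γ t) (deriv γ t) - ω m (γ t) (deriv γ t)| ≤ 1 := by
      rw [abs_sub_comm]
      exact le_trans (hclose m t ht) (min_le_right _ _)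
    have h3 := hDb m t ht
    linarith [abs_sub_abs_le_abs_sub (ωb m (γ t) (deriv γ t)) (ω m (γ t) (deriv γ t))]
  have hDb'' : ∀ m, ∀ t ∈ Icc (0:ℝ) 1, |ω m (γ t) (deriv γ t)| ≤ D + 1 :=
    fun m t ht => le_trans (hDb m t ht) (by linarith)
  refine ⟨ωb, hpoly, ?_⟩
  -- the difference estimate
  have hfor : List.Forall₂ (fun a b => ∀ t ∈ Icc (0:ℝ) 1,
      |a (γ t) (deriv γ t) - b (γ t) (deriv γ t)| ≤ ε)
      (List.ofFn ω).reverse (List.ofFn ωb).reverse := by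
    apply List.rel_reverse
    exact forall₂_ofFn _ _ fun m t ht => le_trans (hclose m t ht) (min_le_left _ _)
  have hmem₁ : ∀ ν ∈ (List.ofFn ω).reverse, ∃ m, ω m = ν := by
    intro ν hν
    rw [List.mem_reverse, List.mem_ofFn] at hν
    exact hν
  have hmem₂ : ∀ ν ∈ (List.ofFn ωb).reverse, ∃ m, ωb m = ν := by
    intro ν hν
    rw [List.mem_reverse, List.mem_ofFn] at hν
    exact hν
  have hc₁ : ∀ ν ∈ (List.ofFn ω).reverse, Continuous ν := by
    intro ν hν; obtain ⟨m, rfl⟩ := hmem₁ ν hν; exact (hω m).1.continuous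
  have hc₂ : ∀ ν ∈ (List.ofFn ωb).reverse, Continuous ν := by
    intro ν hν; obtain ⟨m, rfl⟩ := hmem₂ ν hν; exact hωbc m
  have hb₁ : ∀ ν ∈ (List.ofFn ω).reverse, ∀ t ∈ Icc (0:ℝ) 1,
      |ν (γ t) (deriv γ t)| ≤ D + 1 := by
    intro ν hν; obtain ⟨m, rfl⟩ := hmem₁ ν hν; exact hDb'' m
  have hb₂ : ∀ ν ∈ (List.ofFn ωb).reverse, ∀ t ∈ Icc (0:ℝ) 1,
      |ν (γ t) (deriv γ t)| ≤ D + 1 := by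
    intro ν hν; obtain ⟨m, rfl⟩ := hmem₂ ν hν; exact hDb' m
  have hdiff := oneFormIterAux_diff hc (D := D + 1) (ε := ε) (by linarith) hε0.le
    (List.ofFn ω).reverse (List.ofFn ωb).reverse hfor hc₁ hc₂ hb₁ hb₂ 1
    (right_mem_Icc.mpr zero_le_one)
  have hlen : ((List.ofFn ω).reverse.length : ℝ) = (q : ℝ) := by
    rw [List.length_reverse, List.length_ofFn]
  rw [hlen] at hdiff
  intro h0
  have hJJ : |J| ≤ (q : ℝ) * (D + 1) ^ q * ε := by
    have : oneFormIterAux γ (List.ofFn ω).reverse 1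
        - oneFormIterAux γ (List.ofFn ωb).reverse 1 = J := by
      rw [hJdef]
      rw [show oneFormIterInt γ (List.ofFn ωb) = oneFormIterAux γ (List.ofFn ωb).reverse 1
        from rfl] at h0
      rw [show oneFormIterInt γ (List.ofFn ω) = oneFormIterAux γ (List.ofFn ω).reverse 1
        from rfl]
      rw [h0, sub_zero]
    rw [this] at hdiff
    have hlen2 : (List.ofFn ω).reverse.length = q := by
      rw [List.length_reverse, List.length_ofFn]
    rw [hlen2] at hdiff
    exact hdiff
  linarith

end ChenPaper
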